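/- arXiv:2403.15140 — 6 statements merged into one kernel-verified Lean document; each statement's English description precedes it below -/
import Mathlib

section
/- Let ω ≥ 0, k > 0 and D < 0 be real numbers and set κ = k/(1 − k·D). For all real x and ẽ satisfying the sector constraint ẽ·x ≥ (1/κ)·x², one has ((1/κ)·x − ẽ)·(ω·D·x + ω·ẽ) ≤ 0. -/
/-!
Since `1/κ = 1/k - D`, the substitution `u = x/κ - ẽ` turns the supply rate into
`ω · (u·x/k - u²)`, and the sector constraint says exactly `u·x ≤ 0`.
-/

theorem one_div_div_one_sub_mul {K : Type*} [Field K] {k : K} (hk : k ≠ 0) (D : K) :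
    1 / (k / (1 - k * D)) = 1 / k - D := by
  rw [one_div_div, sub_div, mul_div_cancel_left₀ D hk]

theorem sub_mul_sub_mul_add_eq {R : Type*} [CommRing R] (ω c D x e : R) :
    ((c - D) * x - e) * (ω * D * x + ω * e) =
      ω * (c * (((c - D) * x - e) * x) - ((c - D) * x - e) ^ 2) := by
  ring

theorem sub_mul_sub_mul_add_nonpos {R : Type*} [CommRing R] [LinearOrder R] [IsStrictOrderedRing R]
    {ω c D x e : R} (hω : 0 ≤ ω) (hc : 0 ≤ c) (h : (c - D) * x ^ 2 ≤ e * x) :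
    ((c - D) * x - e) * (ω * D * x + ω * e) ≤ 0 := by
  have hux : ((c - D) * x - e) * x ≤ 0 := by linear_combination h
  rw [sub_mul_sub_mul_add_eq]
  exact mul_nonpos_of_nonneg_of_nonpos hω
    (sub_nonpos_of_le ((mul_nonpos_of_nonneg_of_nonpos hc hux).trans (sq_nonneg _)))

theorem higs_irc_integrator_mode_dissipation_general (ω k D : ℝ)
    (hω : 0 ≤ ω) (hk : 0 < k)
    (κ : ℝ) (hκ : κ = k / (1 - k * D)) :
    ∀ x et : ℝ, et * x ≥ (1 / κ) * x ^ 2 →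
      ((1 / κ) * x - et) * (ω * D * x + ω * et) ≤ 0 := by
  intro x et h
  rw [hκ, one_div_div_one_sub_mul hk.ne'] at h ⊢
  exact sub_mul_sub_mul_add_nonpos hω (one_div_nonneg.mpr hk.le) h

/-- Dissipation inequality for the integrator mode of a HIGS-based IRC. -/
theorem higs_irc_integrator_mode_dissipation (ω k D : ℝ)
    (hω : 0 ≤ ω) (hk : 0 < k) (hD : D < 0)
    (κ : ℝ) (hκ : κ = k / (1 - k * D)) :
    ∀ x et : ℝ, et * x ≥ (1 / κ) * x ^ 2 →
      ((1 / κ) * x - et) * (ω * D * x + ω * et) ≤ 0 :=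
  higs_irc_integrator_mode_dissipation_general ω k D hω hk κ hκ
end

section
/- Let A and Y be real n×n matrices with A invertible and Y symmetric and invertible. If A·Y + Y·Aᵀ is negative semidefinite, then A⁻ᵀ·Y⁻¹ + Y⁻¹·A⁻¹ is negative semidefinite. -/
open Matrix

/-- A real symmetric matrix `M` is negative semidefinite if `xᵀMx ≤ 0` for all
vectors `x`. -/
def Matrix.NegSemidef {n : ℕ} (M : Matrix (Fin n) (Fin n) ℝ) : Prop :=
  M.IsSymm ∧ ∀ x : Fin n → ℝ, x ⬝ᵥ M.mulVec x ≤ 0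

theorem Matrix.NegSemidef.mul_mul_transpose {m n : ℕ} {M : Matrix (Fin n) (Fin n) ℝ}
    (hM : M.NegSemidef) (C : Matrix (Fin m) (Fin n) ℝ) :
    (C * M * Cᵀ).NegSemidef := by
  refine ⟨?_, fun x => ?_⟩
  · change (C * M * Cᵀ)ᵀ = _
    rw [transpose_mul, transpose_mul, transpose_transpose, hM.1, Matrix.mul_assoc]
  · have hquad : x ⬝ᵥ (C * M * Cᵀ) *ᵥ x = (Cᵀ *ᵥ x) ⬝ᵥ M *ᵥ (Cᵀ *ᵥ x) := by
      rw [Matrix.mul_assoc, ← mulVec_mulVec, ← mulVec_mulVec, dotProduct_mulVec,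
        ← mulVec_transpose]
    exact hquad ▸ hM.2 _

theorem Matrix.inv_transpose_mul_inv_add_inv_mul_inv {ι R : Type*} [Fintype ι] [DecidableEq ι]
    [CommRing R] {A Y : Matrix ι ι R} (hA : IsUnit A.det) (hYsymm : Y.IsSymm)
    (hY : IsUnit Y.det) :
    (A⁻¹)ᵀ * Y⁻¹ + Y⁻¹ * A⁻¹ = (Y⁻¹ * A⁻¹) * (A * Y + Y * Aᵀ) * (Y⁻¹ * A⁻¹)ᵀ := by
  have hYinvT : (Y⁻¹)ᵀ = Y⁻¹ := by rw [transpose_nonsing_inv, hYsymm.eq]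
  have hAT : IsUnit Aᵀ.det := by rwa [det_transpose]
  rw [transpose_mul, hYinvT, transpose_nonsing_inv, Matrix.mul_add, Matrix.add_mul]
  simp only [Matrix.mul_assoc]
  congr 1
  · rw [nonsing_inv_mul_cancel_left A _ hA, nonsing_inv_mul_cancel_left Y _ hY]
  · rw [mul_nonsing_inv_cancel_left Aᵀ _ hAT, mul_nonsing_inv Y hY, Matrix.mul_one]

/-- If `AY + YAᵀ ≤ 0` with `A` invertible and `Y` symmetric invertible, then
`A⁻ᵀY⁻¹ + Y⁻¹A⁻¹ ≤ 0`. -/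
theorem inv_lyapunov_negSemidef (n : ℕ) (A Y : Matrix (Fin n) (Fin n) ℝ)
    (hA : IsUnit A.det) (hYsymm : Y.IsSymm) (hYinv : IsUnit Y.det)
    (h : (A * Y + Y * Aᵀ).NegSemidef) :
    ((A⁻¹)ᵀ * Y⁻¹ + Y⁻¹ * A⁻¹).NegSemidef := by
  rw [inv_transpose_mul_inv_add_inv_mul_inv hA hYsymm hYinv]
  exact h.mul_mul_transpose _
end

section
/- Let k_p > 0, k_1 > 0, k_2 > 0, D < 0 and ω > 0 be real numbers, and define the complex rational function K̃(s) = (k_p·s² + k_1·s + k_2)/((1 − k_p·D)·s² − k_1·D·s − k_2·D). Then the denominator of K̃ is nonzero at s = iω and at s = −iω, and the complex number i·(K̃(iω) − K̃(−iω)) is real and equals 2·k_1·ω³ / (((1 − k_p·D)·ω² + k_2·D)² + (k_1·D·ω)²), which is strictly positive. -/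
/-!
Because the coefficients are real, `K̃(-iω)` is the complex conjugate of `K̃(iω)`, so
`i (K̃(iω) - K̃(-iω)) = -2 Im K̃(iω)`. Writing `K̃(iω) = n / d`, the imaginary part is
`Im (n · conj d) / |d|²`, and in `Im (n · conj d)` the `k_p` and `k₂` terms cancel, leaving
`-k₁ ω³`. The denominator never vanishes on the imaginary axis since its imaginary part is
`-k₁ D ω ≠ 0`.
-/

open Complex ComplexConjugate

def realQuadratic (a b c : ℝ) (s : ℂ) : ℂ := a * s ^ 2 + b * s + c

section RealQuadratic

variable (a b c ω : ℝ)

theorem realQuadratic_conj (s : ℂ) :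
    conj (realQuadratic a b c s) = realQuadratic a b c (conj s) := by
  simp [realQuadratic]

theorem realQuadratic_neg_I_mul :
    realQuadratic a b c (-(I * ω)) = conj (realQuadratic a b c (I * ω)) := by
  simp [realQuadratic_conj]

theorem realQuadratic_I_mul_re : (realQuadratic a b c (I * ω)).re = c - a * ω ^ 2 := by
  simp [realQuadratic, mul_pow, ← ofReal_pow]
  ring

theorem realQuadratic_I_mul_im : (realQuadratic a b c (I * ω)).im = b * ω := by
  simp [realQuadratic, mul_pow, ← ofReal_pow]

variable {a b c ω} in
theorem realQuadratic_I_mul_ne_zero (hb : b ≠ 0) (hω : ω ≠ 0) :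
    realQuadratic a b c (I * ω) ≠ 0 := fun h => by
  simpa [realQuadratic_I_mul_im, hb, hω] using congrArg im h

end RealQuadratic

theorem Complex.I_mul_sub_conj (z : ℂ) : I * (z - conj z) = ((-2 * z.im : ℝ) : ℂ) := by
  rw [sub_conj]
  push_cast
  linear_combination (2 * (z.im : ℂ)) * I_sq

theorem I_mul_realQuadratic_div_sub (a₁ b₁ c₁ a₂ b₂ c₂ ω : ℝ) :
    I * (realQuadratic a₁ b₁ c₁ (I * ω) / realQuadratic a₂ b₂ c₂ (I * ω)
        - realQuadratic a₁ b₁ c₁ (-(I * ω)) / realQuadratic a₂ b₂ c₂ (-(I * ω)))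
      = ((2 * ω * ((c₁ - a₁ * ω ^ 2) * b₂ - b₁ * (c₂ - a₂ * ω ^ 2))
          / ((c₂ - a₂ * ω ^ 2) ^ 2 + (b₂ * ω) ^ 2) : ℝ) : ℂ) := by
  rw [realQuadratic_neg_I_mul, realQuadratic_neg_I_mul, ← map_div₀, I_mul_sub_conj]
  congr 1
  rw [div_im, normSq_apply, realQuadratic_I_mul_re, realQuadratic_I_mul_re,
    realQuadratic_I_mul_im, realQuadratic_I_mul_im]
  ring

theorem pii2rc_sni_frequency_condition_general (kp k1 k2 D ω : ℝ)
    (hk1 : 0 < k1) (hD : D < 0) (hω : 0 < ω)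
    (num den K : ℂ → ℂ)
    (hnum : num = fun s => (kp : ℂ) * s ^ 2 + (k1 : ℂ) * s + (k2 : ℂ))
    (hden : den = fun s => ((1 - kp * D : ℝ) : ℂ) * s ^ 2 - ((k1 * D : ℝ) : ℂ) * s
      - ((k2 * D : ℝ) : ℂ))
    (hK : K = fun s => num s / den s) :
    den (Complex.I * (ω : ℂ)) ≠ 0 ∧ den (-(Complex.I * (ω : ℂ))) ≠ 0 ∧
      Complex.I * (K (Complex.I * (ω : ℂ)) - K (-(Complex.I * (ω : ℂ))))
        = ((2 * k1 * ω ^ 3 /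
            (((1 - kp * D) * ω ^ 2 + k2 * D) ^ 2 + (k1 * D * ω) ^ 2) : ℝ) : ℂ) ∧
      0 < 2 * k1 * ω ^ 3 / (((1 - kp * D) * ω ^ 2 + k2 * D) ^ 2 + (k1 * D * ω) ^ 2) := by
  have hnum' : num = realQuadratic kp k1 k2 := hnum
  have hden' : den = realQuadratic (1 - kp * D) (-(k1 * D)) (-(k2 * D)) := by
    rw [hden]
    funext s
    simp only [realQuadratic, ofReal_neg]
    ring
  subst hK hnum' hden'
  have hk1D : k1 * D ≠ 0 := mul_ne_zero hk1.ne' hD.ne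
  have hden_ne := realQuadratic_I_mul_ne_zero (a := 1 - kp * D) (c := -(k2 * D))
    (neg_ne_zero.2 hk1D) hω.ne'
  refine ⟨hden_ne, ?_, ?_, ?_⟩
  · rw [realQuadratic_neg_I_mul]
    exact (map_ne_zero _).2 hden_ne
  · rw [I_mul_realQuadratic_div_sub]
    congr 2 <;> ring
  · have hk1Dω : k1 * D * ω ≠ 0 := mul_ne_zero hk1D hω.ne'
    exact div_pos (by positivity)
      (add_pos_of_nonneg_of_pos (sq_nonneg _) ((sq_pos_of_ne_zero hk1Dω)))

/-- Frequency-domain SNI condition for the PII²RC: for all `ω > 0`,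
`j(K̃(jω) - K̃(-jω))` is real, equals
`2k₁ω³/(((1 - k_p D)ω² + k₂D)² + (k₁Dω)²)`, and is strictly positive. -/
theorem pii2rc_sni_frequency_condition (kp k1 k2 D ω : ℝ)
    (hkp : 0 < kp) (hk1 : 0 < k1) (hk2 : 0 < k2) (hD : D < 0) (hω : 0 < ω)
    (num den K : ℂ → ℂ)
    (hnum : num = fun s => (kp : ℂ) * s ^ 2 + (k1 : ℂ) * s + (k2 : ℂ))
    (hden : den = fun s => ((1 - kp * D : ℝ) : ℂ) * s ^ 2 - ((k1 * D : ℝ) : ℂ) * s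
      - ((k2 * D : ℝ) : ℂ))
    (hK : K = fun s => num s / den s) :
    den (Complex.I * (ω : ℂ)) ≠ 0 ∧ den (-(Complex.I * (ω : ℂ))) ≠ 0 ∧
      Complex.I * (K (Complex.I * (ω : ℂ)) - K (-(Complex.I * (ω : ℂ))))
        = ((2 * k1 * ω ^ 3 /
            (((1 - kp * D) * ω ^ 2 + k2 * D) ^ 2 + (k1 * D * ω) ^ 2) : ℝ) : ℂ) ∧
      0 < 2 * k1 * ω ^ 3 / (((1 - kp * D) * ω ^ 2 + k2 * D) ^ 2 + (k1 * D * ω) ^ 2) :=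
  pii2rc_sni_frequency_condition_general kp k1 k2 D ω hk1 hD hω num den K hnum hden hK
end

section
/- Let ω ≥ 0 and k > 0 be real numbers. Let x, e : ℝ → ℝ, let t ∈ ℝ, suppose x has derivative x' at t, and suppose that at time t either (integrator mode) x' = ω·e(t) and e(t)·x(t) ≥ (1/k)·x(t)², or (gain mode) x(t) = k·e(t). Then the storage function s ↦ (1/(2k))·x(s)² has derivative (1/k)·x(t)·x' at t and this derivative satisfies (1/k)·x(t)·x' ≤ e(t)·x'. -/
/-!
In gain mode `x = k e`, so `V̇ = x ẋ / k = e ẋ`. In integrator mode `ẋ = ω e` and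
`e ẋ - V̇ = ω e (e - x/k)`; the sector condition says `x (e - x/k) ≥ 0`, and
`e (e - x/k) = (e - x/k)² + x (e - x/k) / k` is then nonnegative as well.
-/

theorem hasDerivAt_const_mul_sq {x : ℝ → ℝ} {x' t : ℝ} (k : ℝ) (hx : HasDerivAt x x' t) :
    HasDerivAt (fun s => (1 / (2 * k)) * x s ^ 2) ((1 / k) * x t * x') t := by
  refine ((hx.fun_pow 2).const_mul (1 / (2 * k))).congr_deriv ?_
  push_cast
  ring

theorem mul_sub_div_nonneg_of_sector {k e u : ℝ} (hk : 0 ≤ k) (hsec : e * u ≥ (1 / k) * u ^ 2) :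
    0 ≤ e * (e - u / k) := by
  have hu : 0 ≤ u * (e - u / k) := by
    calc 0 ≤ e * u - (1 / k) * u ^ 2 := by linarith
      _ = u * (e - u / k) := by ring
  calc 0 ≤ (e - u / k) ^ 2 + (1 / k) * (u * (e - u / k)) := by positivity
    _ = e * (e - u / k) := by ring

theorem storage_rate_le_of_integrator {ω k e u u' : ℝ} (hω : 0 ≤ ω) (hk : 0 ≤ k)
    (hu' : u' = ω * e) (hsec : e * u ≥ (1 / k) * u ^ 2) :
    (1 / k) * u * u' ≤ e * u' := by
  have hgap : e * u' - (1 / k) * u * u' = ω * (e * (e - u / k)) := by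
    rw [hu']
    ring
  linarith [mul_nonneg hω (mul_sub_div_nonneg_of_sector hk hsec)]

theorem storage_rate_eq_of_gain {k e u u' : ℝ} (hk : k ≠ 0) (hgain : u = k * e) :
    (1 / k) * u * u' = e * u' := by
  rw [hgain]
  field_simp

/-- A HIGS is a nonlinear NI system with storage function `V(x) = x²/(2k)`
satisfying `V̇ ≤ e·ẋ` in both the integrator and the gain mode. -/
theorem higs_is_NI (ω k : ℝ) (hω : 0 ≤ ω) (hk : 0 < k)
    (x e : ℝ → ℝ) (t : ℝ) (x' : ℝ) (hx : HasDerivAt x x' t)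
    (hmode : (x' = ω * e t ∧ e t * x t ≥ (1 / k) * (x t) ^ 2) ∨ x t = k * e t) :
    HasDerivAt (fun s => (1 / (2 * k)) * (x s) ^ 2) ((1 / k) * x t * x') t ∧
      (1 / k) * x t * x' ≤ e t * x' := by
  refine ⟨hasDerivAt_const_mul_sq k hx, ?_⟩
  rcases hmode with ⟨hintegrator, hsec⟩ | hgain
  · exact storage_rate_le_of_integrator hω hk.le hintegrator hsec
  · exact (storage_rate_eq_of_gain hk.ne' hgain).le
end

section
/- Let Y be a real symmetric positive definite n×n matrix, let C be a real 1×n matrix, let k_p > 0, k_{h1} > 0 and D < 0 be real numbers, and set γ = 1/(1 − D·k_p). Then the symmetric (n+2)×(n+2) block matrix M̃ with blocks [[Y⁻¹ − k_p·γ·Cᵀ·C, −γ·Cᵀ, −γ·Cᵀ], [−γ·C, 1/k_{h1} − D·γ, −D·γ], [−γ·C, −D·γ, −D·γ]] (block sizes n, 1, 1) is positive definite if and only if D < −C·Y·Cᵀ. -/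
/-!
Take the Schur complement of `M̃` with respect to its lower-right `2 × 2` block
`!![1/k_{h1} + b, b; b, b]` (`b = -Dγ > 0`), which is congruent to `diag(1/k_{h1}, b)` and hence
positive definite. Because `γ (1 - D k_p) = 1`, the complement collapses to `Y⁻¹ + D⁻¹ CᵀC`.
Reading `Y⁻¹ - Cᵀ (-D)⁻¹ C` and `-D - C Y Cᵀ` as the two Schur complements of
`!![-D, C; Cᵀ, Y⁻¹]`, one is positive definite iff the other is, i.e. iff `C Y Cᵀ < -D`.
-/

open Matrix
open scoped ComplexOrder

namespace Matrix

section SchurComplement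

variable {𝕜 m n : Type*} [RCLike 𝕜] [Fintype m] [DecidableEq m] [Fintype n] [DecidableEq n]

theorem posDef_fromBlocks₁₁_iff {A : Matrix m m 𝕜} (B : Matrix m n 𝕜) (D : Matrix n n 𝕜)
    (hA : A.PosDef) [Invertible A] :
    (fromBlocks A B Bᴴ D).PosDef ↔ (D - Bᴴ * A⁻¹ * B).PosDef := by
  have hdet : (fromBlocks A B Bᴴ D).det = A.det * (D - Bᴴ * A⁻¹ * B).det := by
    rw [det_fromBlocks₁₁, invOf_eq_nonsing_inv]
  refine ⟨fun h => ?_, fun h => ?_⟩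
  · refine ((PosDef.fromBlocks₁₁ B D hA).1 h.posSemidef).posDef_iff_det_ne_zero.2 ?_
    exact right_ne_zero_of_mul (hdet ▸ h.det_pos.ne')
  · refine ((PosDef.fromBlocks₁₁ B D hA).2 h.posSemidef).posDef_iff_det_ne_zero.2 ?_
    exact hdet ▸ mul_ne_zero hA.det_pos.ne' h.det_pos.ne'

theorem posDef_fromBlocks₂₂_iff (A : Matrix m m 𝕜) (B : Matrix m n 𝕜) {D : Matrix n n 𝕜}
    (hD : D.PosDef) [Invertible D] :
    (fromBlocks A B Bᴴ D).PosDef ↔ (A - B * D⁻¹ * Bᴴ).PosDef := by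
  have hdet : (fromBlocks A B Bᴴ D).det = D.det * (A - B * D⁻¹ * Bᴴ).det := by
    rw [det_fromBlocks₂₂, invOf_eq_nonsing_inv]
  refine ⟨fun h => ?_, fun h => ?_⟩
  · refine ((PosDef.fromBlocks₂₂ A B hD).1 h.posSemidef).posDef_iff_det_ne_zero.2 ?_
    exact right_ne_zero_of_mul (hdet ▸ h.det_pos.ne')
  · refine ((PosDef.fromBlocks₂₂ A B hD).2 h.posSemidef).posDef_iff_det_ne_zero.2 ?_
    exact hdet ▸ mul_ne_zero hD.det_pos.ne' h.det_pos.ne'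

theorem posDef_inv_sub_conjTranspose_mul_inv_mul_iff {Y : Matrix n n 𝕜} {S : Matrix m m 𝕜}
    (hY : Y.PosDef) (hS : S.PosDef) (C : Matrix m n 𝕜) :
    (Y⁻¹ - Cᴴ * S⁻¹ * C).PosDef ↔ (S - C * Y * Cᴴ).PosDef := by
  let := hS.isUnit.invertible
  let := hY.isUnit.invertible
  let := hY.inv.isUnit.invertible
  rw [← posDef_fromBlocks₁₁_iff C Y⁻¹ hS, posDef_fromBlocks₂₂_iff S C hY.inv,
    inv_inv_of_invertible]

end SchurComplement

theorem posDef_iff_of_unique {ι : Type*} [Fintype ι] [Unique ι] (M : Matrix ι ι ℝ) :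
    M.PosDef ↔ 0 < M default default := by
  have hM : M = diagonal fun _ => M default default := by
    ext i j
    simp [Subsingleton.elim i default, Subsingleton.elim j default]
  rw [hM, posDef_diagonal_iff]
  simp

theorem posDef_fin_two_add_of_pos {a b : ℝ} (ha : 0 < a) (hb : 0 < b) :
    (!![a + b, b; b, b]).PosDef := by
  have hP : IsUnit (!![1, 0; 1, 1] : Matrix (Fin 2) (Fin 2) ℝ) := by
    simp [isUnit_iff_isUnit_det, det_fin_two]
  have hE : !![a + b, b; b, b] = star !![1, 0; 1, 1] * diagonal ![a, b] * !![1, 0; 1, 1] := by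
    ext i j
    fin_cases i <;> fin_cases j <;> simp [star_eq_conjTranspose, mul_apply, Fin.sum_univ_two]
  rw [hE, hP.posDef_star_left_conjugate_iff, posDef_diagonal_iff]
  intro i; fin_cases i <;> simp [ha, hb]

theorem inv_fin_two_add {a b : ℝ} (ha : a ≠ 0) (hb : b ≠ 0) :
    (!![a + b, b; b, b])⁻¹ = !![a⁻¹, -a⁻¹; -a⁻¹, a⁻¹ + b⁻¹] := by
  apply inv_eq_right_inv
  ext i j
  fin_cases i <;> fin_cases j <;> simp [mul_apply, Fin.sum_univ_two] <;> field_simp <;> ring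

theorem schur_complement_fin_two_add_eq {m : Type*} [Fintype m] (P : Matrix m m ℝ)
    (C : Matrix (Fin 1) m ℝ) {kp a D γ : ℝ} (ha : a ≠ 0) (hD : D ≠ 0)
    (hγD : γ * (1 - D * kp) = 1) :
    P - (kp * γ) • (Cᵀ * C) - (of fun i (_ : Fin 2) => -γ * C 0 i) *
        !![a + -D * γ, -D * γ; -D * γ, -D * γ]⁻¹ * (of fun i (_ : Fin 2) => -γ * C 0 i)ᴴ
      = P - Cᴴ * ((-D) • 1 : Matrix (Fin 1) (Fin 1) ℝ)⁻¹ * C := by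
  have hγ : γ ≠ 0 := left_ne_zero_of_mul_eq_one hγD
  have hSinv : ((-D) • 1 : Matrix (Fin 1) (Fin 1) ℝ)⁻¹ = (-D)⁻¹ • 1 :=
    inv_eq_left_inv (by simp [smul_smul, hD])
  rw [inv_fin_two_add ha (by simp [hD, hγ]), hSinv]
  ext i j
  simp only [Fin.isValue, neg_mul, inv_neg, _root_.mul_inv_rev,
    conjTranspose_eq_transpose_of_trivial, Matrix.sub_apply, Matrix.smul_apply, mul_apply,
    Finset.univ_unique, Fin.default_eq_zero, transpose_apply, Finset.sum_singleton, smul_eq_mul,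
    of_apply, cons_val', cons_val_fin_one, Finset.sum_neg_distrib, Fin.sum_univ_two,
    cons_val_zero, cons_val_one, neg_add_rev, mul_neg, neg_neg, add_neg_cancel, zero_mul,
    zero_add, sub_neg_eq_add, neg_smul, Matrix.mul_neg, Matrix.mul_smul, Matrix.mul_one,
    Matrix.neg_mul, smul_mul, Matrix.neg_apply]
  -- the coefficient of `Cᵀ C` is `-k_p γ + γ / D = γ (1 - D k_p) / D`
  field_simp
  linear_combination a * C 0 i * C 0 j * hγD

end Matrix

/-- The Lyapunov matrix `M̃` of the interconnection of a linear NI system and a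
HIGS-based PII² resonant controller is positive definite iff `D < -CYCᵀ`. -/
theorem pii2rc_lyapunov_matrix_posDef_iff (n : ℕ) (Y : Matrix (Fin n) (Fin n) ℝ)
    (hY : Y.PosDef) (C : Matrix (Fin 1) (Fin n) ℝ) (kp kh1 D : ℝ)
    (hkp : 0 < kp) (hkh1 : 0 < kh1) (hD : D < 0)
    (γ : ℝ) (hγ : γ = 1 / (1 - D * kp)) :
    (Matrix.fromBlocks (Y⁻¹ - (kp * γ) • (Cᵀ * C))
        (Matrix.of fun i (_ : Fin 2) => -γ * C 0 i)
        (Matrix.of fun (_ : Fin 2) j => -γ * C 0 j)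
        !![1 / kh1 - D * γ, -D * γ; -D * γ, -D * γ]).PosDef
      ↔ D < -(C * Y * Cᵀ) 0 0 := by
  have hden : 0 < 1 - D * kp := by nlinarith
  have hγD : γ * (1 - D * kp) = 1 := by rw [hγ]; field_simp
  have hBH : (of fun (_ : Fin 2) j => -γ * C 0 j) = (of fun i (_ : Fin 2) => -γ * C 0 i)ᴴ := by
    ext; simp
  have hE : !![1 / kh1 - D * γ, -D * γ; -D * γ, -D * γ]
      = !![1 / kh1 + -D * γ, -D * γ; -D * γ, -D * γ] := by rw [neg_mul, ← sub_eq_add_neg]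
  have hEpos : (!![1 / kh1 + -D * γ, -D * γ; -D * γ, -D * γ]).PosDef :=
    posDef_fin_two_add_of_pos (one_div_pos.2 hkh1) (by nlinarith [hγ ▸ one_div_pos.2 hden])
  let := hEpos.isUnit.invertible
  have hS : ((-D) • 1 : Matrix (Fin 1) (Fin 1) ℝ).PosDef := by
    simpa [posDef_iff_of_unique] using hD
  rw [hBH, hE, posDef_fromBlocks₂₂_iff _ _ hEpos,
    schur_complement_fin_two_add_eq _ _ (by positivity) hD.ne hγD,
    posDef_inv_sub_conjTranspose_mul_inv_mul_iff hY hS, posDef_iff_of_unique]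
  simp only [neg_smul, conjTranspose_eq_transpose_of_trivial, Fin.default_eq_zero,
    Matrix.sub_apply, Matrix.neg_apply, Matrix.smul_apply, one_apply_eq, smul_eq_mul, mul_one,
    sub_pos]
  exact lt_neg
end

section
/- Let A, Y be real n×n matrices with A invertible and Y symmetric positive definite such that A·Y + Y·Aᵀ is negative semidefinite, let C be a real 1×n matrix, and set B = −A·Y·Cᵀ. Let ω_h ≥ 0, k_h > 0, D < 0 and κ̃ = k_h/(1 − k_h·D). Let x : ℝ → ℝⁿ and x_h : ℝ → ℝ, let t ∈ ℝ, suppose x has derivative vector v at t with v = A·x(t) + B·x_h(t), suppose x_h has derivative x' at t, set ẽ = C·x(t) (a scalar), and suppose at time t either (integrator mode) x' = ω_h·D·x_h(t) + ω_h·ẽ and ẽ·x_h(t) ≥ (1/κ̃)·x_h(t)², or (gain mode) x_h(t) = κ̃·ẽ. Then the function s ↦ ½·x(s)ᵀ·Y⁻¹·x(s) − x_h(s)·(C·x(s)) + (1/(2κ̃))·x_h(s)² has derivative at t equal to vᵀ·A⁻ᵀ·Y⁻¹·v + x'·((1/κ̃)·x_h(t) − ẽ), and this derivative is ≤ 0.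 -/
/-!
Differentiate `W` term by term. Substituting `B = -AYCᵀ` gives `A⁻¹v = x - x_h • YCᵀ`, so the
plant part of `Ẇ` collapses to `vᵀA⁻ᵀY⁻¹v`, which is half the quadratic form of `AY + YAᵀ` at
`z = Y⁻¹A⁻¹v`, hence `≤ 0`. The controller part `x'(x_h/κ̃ - ẽ)` vanishes in gain mode; in
integrator mode, since `D = 1/k_h - 1/κ̃`, it equals
`-ω_h((ẽ - x_h/κ̃)² + (ẽ x_h - x_h²/κ̃)/k_h)`, which the sector condition makes `≤ 0`.
-/

open Matrix

section Calculus

variable {𝕜 : Type*} [NontriviallyNormedField 𝕜] {ι m : Type*} [Fintype ι]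
  {f g : 𝕜 → ι → 𝕜} {f' g' : ι → 𝕜} {t : 𝕜}

theorem HasDerivAt.dotProduct (hf : HasDerivAt f f' t) (hg : HasDerivAt g g' t) :
    HasDerivAt (fun s => f s ⬝ᵥ g s) (f' ⬝ᵥ g t + f t ⬝ᵥ g') t := by
  have hfi := hasDerivAt_pi.mp hf
  have hgi := hasDerivAt_pi.mp hg
  have h := HasDerivAt.fun_sum (u := Finset.univ) fun i _ => (hfi i).mul (hgi i)
  rw [Finset.sum_add_distrib] at h
  exact h

theorem HasDerivAt.mulVec (M : Matrix m ι 𝕜) (hf : HasDerivAt f f' t) :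
    HasDerivAt (fun s => M *ᵥ f s) (M *ᵥ f') t :=
  hasDerivAt_pi.mpr fun i => by
    have := (hasDerivAt_const t (M i)).dotProduct hf
    rwa [zero_dotProduct, zero_add] at this

end Calculus

section LinearAlgebra

variable {R : Type*} [CommRing R] {ι : Type*} [Fintype ι]

theorem dotProduct_transpose_mul_mulVec (M N : Matrix ι ι R) (v : ι → R) :
    v ⬝ᵥ (Mᵀ * N) *ᵥ v = (M *ᵥ v) ⬝ᵥ N *ᵥ v := by
  rw [← mulVec_mulVec, dotProduct_mulVec, vecMul_transpose]

theorem Matrix.IsSymm.dotProduct_mulVec_comm {M : Matrix ι ι R} (hM : M.IsSymm) (v w : ι → R) :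
    v ⬝ᵥ M *ᵥ w = w ⬝ᵥ M *ᵥ v := by
  rw [dotProduct_mulVec, ← mulVec_transpose, hM.eq, dotProduct_comm]

theorem Matrix.IsSymm.mulVec_dotProduct_inv_mulVec [DecidableEq ι] {Y : Matrix ι ι R}
    (hY : Y.IsSymm) (hYdet : IsUnit Y.det) (c v : ι → R) : (Y *ᵥ c) ⬝ᵥ Y⁻¹ *ᵥ v = c ⬝ᵥ v := by
  rw [hY.inv.dotProduct_mulVec_comm, mulVec_mulVec, nonsing_inv_mul Y hYdet, one_mulVec,
    dotProduct_comm]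

theorem dotProduct_transpose_inv_mul_inv_mulVec_eq [DecidableEq ι] {A Y : Matrix ι ι R}
    (hA : IsUnit A.det) (hYs : Y.IsSymm) (hYdet : IsUnit Y.det) {x c v : ι → R} {u : R}
    (hv : v = A *ᵥ x - u • A *ᵥ Y *ᵥ c) :
    v ⬝ᵥ (A⁻¹ᵀ * Y⁻¹) *ᵥ v = x ⬝ᵥ Y⁻¹ *ᵥ v - u * (c ⬝ᵥ v) := by
  have hAv : A⁻¹ *ᵥ v = x - u • Y *ᵥ c := by
    rw [hv, mulVec_sub, mulVec_smul, mulVec_mulVec, mulVec_mulVec, nonsing_inv_mul A hA,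
      one_mulVec, one_mulVec]
  rw [dotProduct_transpose_mul_mulVec, hAv, sub_dotProduct, smul_dotProduct,
    hYs.mulVec_dotProduct_inv_mulVec hYdet, smul_eq_mul]

end LinearAlgebra

theorem Matrix.NegSemidef.dotProduct_transpose_inv_mul_inv_mulVec_nonpos {n : ℕ}
    {A Y : Matrix (Fin n) (Fin n) ℝ} (hA : IsUnit A.det) (hYs : Y.IsSymm) (hYdet : IsUnit Y.det)
    (hLyap : (A * Y + Y * Aᵀ).NegSemidef)
    (v : Fin n → ℝ) : v ⬝ᵥ (A⁻¹ᵀ * Y⁻¹) *ᵥ v ≤ 0 := by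
  set z := Y⁻¹ *ᵥ A⁻¹ *ᵥ v with hz
  have hAYz : (A * Y) *ᵥ z = v := by
    rw [hz, mulVec_mulVec, mulVec_mulVec, mul_nonsing_inv_cancel_right _ _ hYdet,
      mul_nonsing_inv A hA, one_mulVec]
  have hYAt : Y * Aᵀ = (A * Y)ᵀ := by rw [transpose_mul, hYs.eq]
  have hzv : z ⬝ᵥ v = v ⬝ᵥ (A⁻¹ᵀ * Y⁻¹) *ᵥ v := by
    rw [dotProduct_transpose_mul_mulVec, hYs.inv.dotProduct_mulVec_comm, dotProduct_comm]
  have h := hLyap.2 z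
  rw [add_mulVec, dotProduct_add, hYAt, mulVec_transpose, dotProduct_comm z (z ᵥ* _),
    ← dotProduct_mulVec, hAYz, hzv] at h
  linarith

theorem higs_supply_rate_nonpos {ωh kh D κ e xh x' : ℝ} (hω : 0 ≤ ωh) (hk : 0 < kh) (hκ : κ ≠ 0)
    (hD : D = 1 / kh - 1 / κ)
    (hmode : (x' = ωh * D * xh + ωh * e ∧ e * xh ≥ (1 / κ) * xh ^ 2) ∨ xh = κ * e) :
    x' * ((1 / κ) * xh - e) ≤ 0 := by
  rcases hmode with ⟨hx', hsector⟩ | hgain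
  · have hsplit : x' * ((1 / κ) * xh - e)
        = -(ωh * ((e - (1 / κ) * xh) ^ 2 + (1 / kh) * (e * xh - (1 / κ) * xh ^ 2))) := by
      rw [hx', hD]; ring
    have hsector' : 0 ≤ (1 / kh) * (e * xh - (1 / κ) * xh ^ 2) :=
      mul_nonneg (by positivity) (sub_nonneg.mpr hsector)
    rw [hsplit, neg_nonpos]
    exact mul_nonneg hω (add_nonneg (sq_nonneg _) hsector')
  · rw [hgain, one_div, inv_mul_cancel_left₀ hκ, sub_self, mul_zero]

/-- Lyapunov decrease `Ẇ ≤ 0` for the closed-loop interconnection of a linear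
NI system (satisfying the NI lemma with certificate `Y`) and a HIGS-based IRC,
along the Lyapunov function `W(x, x_h) = ½xᵀY⁻¹x - x_h·Cx + x_h²/(2κ̃)`. -/
theorem closed_loop_lyapunov_decrease (n : ℕ) (A Y : Matrix (Fin n) (Fin n) ℝ)
    (hA : IsUnit A.det) (hY : Y.PosDef)
    (hLyap : (A * Y + Y * Aᵀ).NegSemidef)
    (C : Matrix (Fin 1) (Fin n) ℝ) (B : Matrix (Fin n) (Fin 1) ℝ)
    (hB : B = -(A * Y * Cᵀ))
    (ωh kh D : ℝ) (hω : 0 ≤ ωh) (hk : 0 < kh) (hD : D < 0)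
    (κ : ℝ) (hκ : κ = kh / (1 - kh * D))
    (x : ℝ → Fin n → ℝ) (xh : ℝ → ℝ) (t : ℝ)
    (v : Fin n → ℝ) (hx : HasDerivAt x v t)
    (hv : v = A.mulVec (x t) + xh t • (fun i => B i 0))
    (x' : ℝ) (hxh : HasDerivAt xh x' t)
    (etil : ℝ) (hetil : etil = C.mulVec (x t) 0)
    (hmode : (x' = ωh * D * xh t + ωh * etil ∧ etil * xh t ≥ (1 / κ) * (xh t) ^ 2)
      ∨ xh t = κ * etil) :
    HasDerivAt
      (fun s => (1 / 2) * (x s ⬝ᵥ Y⁻¹.mulVec (x s)) - xh s * (C.mulVec (x s) 0)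
        + (1 / (2 * κ)) * (xh s) ^ 2)
      (v ⬝ᵥ ((A⁻¹)ᵀ * Y⁻¹).mulVec v + x' * ((1 / κ) * xh t - etil)) t ∧
    v ⬝ᵥ ((A⁻¹)ᵀ * Y⁻¹).mulVec v + x' * ((1 / κ) * xh t - etil) ≤ 0 := by
  have hYs : Y.IsSymm := hY.isHermitian
  have hYdet : IsUnit Y.det := isUnit_iff_ne_zero.mpr hY.det_pos.ne'
  have hκ0 : κ ≠ 0 := hκ ▸ div_ne_zero hk.ne' (by nlinarith)
  have hDκ : D = 1 / kh - 1 / κ := by rw [hκ, one_div_div]; field_simp; ring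
  have hBcol : (fun i => B i 0) = -(A *ᵥ Y *ᵥ C 0) := by
    ext i; rw [hB, neg_apply, Pi.neg_apply, mul_apply', mulVec_mulVec]; rfl
  rw [hBcol, smul_neg, ← sub_eq_add_neg] at hv
  have hW := (((hx.dotProduct (hx.mulVec Y⁻¹)).const_mul (1 / 2)).sub
    (hxh.mul (hasDerivAt_pi.mp (hx.mulVec C) 0))).add ((hxh.pow 2).const_mul (1 / (2 * κ)))
  refine ⟨hW.congr_deriv ?_, add_nonpos
    (hLyap.dotProduct_transpose_inv_mul_inv_mulVec_nonpos hA hYs hYdet v)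
    (higs_supply_rate_nonpos hω hk hκ0 hDκ (hetil ▸ hmode))⟩
  have hCv : (C *ᵥ v) 0 = C 0 ⬝ᵥ v := rfl
  rw [hYs.inv.dotProduct_mulVec_comm v,
    dotProduct_transpose_inv_mul_inv_mulVec_eq hA hYs hYdet hv, hetil, hCv]
  field_simp
  ring
end
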